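/- arXiv:1809.09268 — 5 statements merged into one kernel-verified Lean document; each statement's English description precedes it below -/
import Mathlib

section
/- For every p ∈ (0,1) and every x₀ ∈ ℝ, the infimum of VaR_p(g(X)) over all measurable functions g : ℝ → ℝ satisfying the budget constraint 𝔼[γ(X)·g(X)] ≥ x₀ equals −∞; in particular, the problem of minimizing VaR_p(g(X)) over this class admits no minimizer. -/
open MeasureTheory Filter
open scoped ENNReal Topology Classical

noncomputable def VaR {Ω : Type*} [MeasurableSpace Ω] (P : Measure Ω) (p : ℝ) (Y : Ω → ℝ) : ℝ :=
  sInf {x : ℝ | p ≤ (P {ω | Y ω ≤ x}).toReal}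

noncomputable def ES {Ω : Type*} [MeasurableSpace Ω] (P : Measure Ω) (p : ℝ) (Y : Ω → ℝ) : ℝ :=
  (1 - p)⁻¹ * ∫ u in p..(1 : ℝ), VaR P u Y

/-- The probability space is atomless. -/
def Atomless {Ω : Type*} [MeasurableSpace Ω] (P : Measure Ω) : Prop :=
  ∀ s : Set Ω, MeasurableSet s → 0 < P s →
    ∃ t, t ⊆ s ∧ MeasurableSet t ∧ 0 < P t ∧ P t < P s

/-- The (topological) support of a measure on ℝ. -/
def msupport (μ : Measure ℝ) : Set ℝ :=
  {x | ∀ ε > 0, 0 < μ (Set.Ioo (x - ε) (x + ε))}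

/-- The distribution `μ` has a density (w.r.t. Lebesgue measure) which is positive
on the support of `μ`. -/
def HasPositiveDensityOnSupport (μ : Measure ℝ) : Prop :=
  ∃ f : ℝ → ℝ, Measurable f ∧
    μ = MeasureTheory.volume.withDensity (fun x => ENNReal.ofReal (f x)) ∧
    ∀ x ∈ msupport μ, 0 < f x

/-- The distribution `μ` has a density (w.r.t. Lebesgue measure) which is decreasing
(and positive) on the support of `μ`. -/
def HasDecreasingDensityOnSupport (μ : Measure ℝ) : Prop :=
  ∃ f : ℝ → ℝ, Measurable f ∧
    μ = MeasureTheory.volume.withDensity (fun x => ENNReal.ofReal (f x)) ∧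
    AntitoneOn f (msupport μ) ∧ ∀ x ∈ msupport μ, 0 < f x

/-- Membership in the admissible set 𝒢_cm (complete market): measurable `g` with
budget constraint `𝔼[γ(X)·g(X)] ≥ x₀`. -/
def memGcm {Ω : Type*} [MeasurableSpace Ω] (P : Measure Ω) (X : Ω → ℝ) (γ : ℝ → ℝ)
    (x₀ : ℝ) (g : ℝ → ℝ) : Prop :=
  Measurable g ∧ Integrable (fun ω => γ (X ω) * g (X ω)) P ∧
    x₀ ≤ ∫ ω, γ (X ω) * g (X ω) ∂P

/-- Membership in the admissible set 𝒢_ns (no short-selling):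
`𝔼[γ(X)·g(X)] ≥ x₀` and `0 ≤ g(X) ≤ X` a.s. -/
def memGns {Ω : Type*} [MeasurableSpace Ω] (P : Measure Ω) (X : Ω → ℝ) (γ : ℝ → ℝ)
    (x₀ : ℝ) (g : ℝ → ℝ) : Prop :=
  Measurable g ∧ Integrable (fun ω => γ (X ω) * g (X ω)) P ∧
    x₀ ≤ ∫ ω, γ (X ω) * g (X ω) ∂P ∧
    (∀ᵐ ω ∂P, 0 ≤ g (X ω) ∧ g (X ω) ≤ X ω)

/-- Membership in the admissible set 𝒢_bd (bounded positions):
`𝔼[γ(X)·g(X)] ≥ x₀` and `0 ≤ g(X) ≤ m` a.s. -/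
def memGbd {Ω : Type*} [MeasurableSpace Ω] (P : Measure Ω) (X : Ω → ℝ) (γ : ℝ → ℝ)
    (x₀ m : ℝ) (g : ℝ → ℝ) : Prop :=
  Measurable g ∧ Integrable (fun ω => γ (X ω) * g (X ω)) P ∧
    x₀ ≤ ∫ ω, γ (X ω) * g (X ω) ∂P ∧
    (∀ᵐ ω ∂P, 0 ≤ g (X ω) ∧ g (X ω) ≤ m)

/-!
The law of `X` has a density, hence no atoms, so its cdf is continuous and takes the value `p`
at some `c`. A payoff equal to `r` on `{X ≤ c}` has VaR at most `r`; on `{X > c}`, which has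
probability `1 - p > 0` and where `γ > 0`, it can be set to the constant that meets the budget
exactly. As `r` is arbitrary, VaR is unbounded below over the admissible payoffs.
-/

open Set ProbabilityTheory

namespace ProbabilityTheory

variable {μ : Measure ℝ} [IsProbabilityMeasure μ]

lemma continuous_cdf [NullSingletonClass μ] : Continuous (cdf μ) := by
  refine continuous_iff_continuousAt.2 fun x => continuousAt_iff_continuous_left'_right'.2
    ⟨?_, continuousWithinAt_Ioi_iff_Ici.2 ((cdf μ).right_continuous x)⟩
  refine (monotone_cdf μ).continuousWithinAt_Iio_iff_leftLim_eq.2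
    (le_antisymm ((monotone_cdf μ).leftLim_le le_rfl) ?_)
  -- the jump of `cdf μ` at `x` is the mass of the atom `{x}`
  have h := (cdf μ).measure_singleton x
  rw [measure_cdf, measure_singleton, eq_comm, ENNReal.ofReal_eq_zero] at h
  linarith

lemma exists_cdf_eq [NullSingletonClass μ] {p : ℝ} (hp : p ∈ Ioo (0 : ℝ) 1) :
    ∃ c, cdf μ c = p := by
  obtain ⟨a, ha⟩ := ((tendsto_cdf_atBot μ).eventually_le_const hp.1).exists
  obtain ⟨b, hb⟩ := ((tendsto_cdf_atTop μ).eventually_const_le hp.2).exists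
  exact intermediate_value_univ a b continuous_cdf ⟨ha, hb⟩

end ProbabilityTheory

section VaR

variable {Ω : Type*} [MeasurableSpace Ω] {P : Measure Ω} [IsProbabilityMeasure P] {p : ℝ}

lemma bddBelow_VaR_set {Y : Ω → ℝ} (hY : Measurable Y) (hp : 0 < p) :
    BddBelow {x : ℝ | p ≤ (P {ω | Y ω ≤ x}).toReal} := by
  have := Measure.isProbabilityMeasure_map (μ := P) hY.aemeasurable
  obtain ⟨a, ha⟩ := ((tendsto_cdf_atBot (P.map Y)).eventually_lt_const hp).exists_forall_of_atBot
  refine ⟨a, fun x hx => le_of_not_gt fun hxa => ?_⟩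
  have hlt := ha x hxa.le
  rw [cdf_eq_real, map_measureReal_apply hY measurableSet_Iic] at hlt
  exact hlt.not_ge hx

lemma VaR_le {Y : Ω → ℝ} (hY : Measurable Y) (hp : 0 < p) {t : ℝ}
    (ht : p ≤ P.real {ω | Y ω ≤ t}) : VaR P p Y ≤ t :=
  csInf_le (bddBelow_VaR_set hY hp) ht

end VaR

section ThresholdPayoff

variable {Ω : Type*} [MeasurableSpace Ω] {P : Measure Ω} {X : Ω → ℝ} {γ : ℝ → ℝ}

lemma memGcm_ite (hX : Measurable X) (hγ : Integrable (fun ω => γ (X ω)) P) {x₀ c a b : ℝ}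
    (hbudget : x₀ ≤ a * ∫ ω in {ω | X ω ≤ c}, γ (X ω) ∂P
      + b * ∫ ω in {ω | X ω ≤ c}ᶜ, γ (X ω) ∂P) :
    memGcm P X γ x₀ (fun y => if y ≤ c then a else b) := by
  have hs : MeasurableSet {ω | X ω ≤ c} := measurableSet_le hX measurable_const
  have hpiece : (fun ω => γ (X ω) * if X ω ≤ c then a else b) =
      {ω | X ω ≤ c}.piecewise (fun ω => a * γ (X ω)) (fun ω => b * γ (X ω)) := by
    funext ω
    by_cases h : X ω ≤ c <;> simp [Set.piecewise, h, mul_comm]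
  refine ⟨measurable_const.ite measurableSet_Iic measurable_const, ?_, ?_⟩
  · rw [hpiece]
    exact Integrable.piecewise hs (hγ.const_mul a).integrableOn (hγ.const_mul b).integrableOn
  · rw [hpiece, integral_piecewise hs (hγ.const_mul a).integrableOn (hγ.const_mul b).integrableOn,
      integral_const_mul, integral_const_mul]
    exact hbudget

variable [IsProbabilityMeasure P] {p : ℝ}

lemma VaR_ite_le (hX : Measurable X) (hp : 0 < p) {c a b : ℝ}
    (hc : p ≤ P.real {ω | X ω ≤ c}) :
    VaR P p (fun ω => if X ω ≤ c then a else b) ≤ a := by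
  exact VaR_le ((measurable_const.ite measurableSet_Iic measurable_const).comp hX) hp
    (hc.trans (measureReal_mono fun ω (hω : X ω ≤ c) => by simp [hω]))

lemma exists_memGcm_VaR_le (hX : Measurable X) (hγpos : ∀ x, 0 < γ x)
    (hγ : Integrable (fun ω => γ (X ω)) P) (hp : 0 < p) {c : ℝ}
    (hc : p ≤ P.real {ω | X ω ≤ c}) (hc1 : P.real {ω | X ω ≤ c} < 1) (x₀ r : ℝ) :
    ∃ g, memGcm P X γ x₀ g ∧ VaR P p (fun ω => g (X ω)) ≤ r := by
  set A := ∫ ω in {ω | X ω ≤ c}, γ (X ω) ∂P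
  set B := ∫ ω in {ω | X ω ≤ c}ᶜ, γ (X ω) ∂P
  have hB : 0 < B := by
    have hcompl : 0 < P.real {ω | X ω ≤ c}ᶜ := by
      rw [probReal_compl_eq_one_sub (measurableSet_le hX measurable_const)]
      linarith
    rw [setIntegral_pos_iff_support_of_nonneg_ae (ae_of_all _ fun ω => (hγpos _).le)
      hγ.integrableOn, Function.support_eq_univ fun ω => (hγpos _).ne', univ_inter]
    exact (ENNReal.toReal_pos_iff.1 hcompl).1
  refine ⟨fun y => if y ≤ c then r else (x₀ - r * A) / B, memGcm_ite hX hγ ?_,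
    VaR_ite_le hX hp hc⟩
  rw [div_mul_cancel₀ _ hB.ne']
  linarith

end ThresholdPayoff

theorem stmt0_general {Ω : Type*} [MeasurableSpace Ω] (P : Measure Ω) [IsProbabilityMeasure P]
    (X : Ω → ℝ) (hXmeas : Measurable X)
    (hXdens : HasPositiveDensityOnSupport (Measure.map X P))
    (γ : ℝ → ℝ) (hγpos : ∀ x, 0 < γ x)
    (hγint : Integrable (fun ω => γ (X ω)) P)
    (p : ℝ) (hp : p ∈ Set.Ioo (0 : ℝ) 1)
    (x₀ : ℝ) :
    ¬ BddBelow {v : ℝ | ∃ g : ℝ → ℝ, memGcm P X γ x₀ g ∧ v = VaR P p (fun ω => g (X ω))} ∧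
    ¬ ∃ g : ℝ → ℝ, memGcm P X γ x₀ g ∧
        ∀ h : ℝ → ℝ, memGcm P X γ x₀ h →
          VaR P p (fun ω => g (X ω)) ≤ VaR P p (fun ω => h (X ω)) := by
  obtain ⟨f, -, hdens, -⟩ := hXdens
  have := Measure.isProbabilityMeasure_map (μ := P) hXmeas.aemeasurable
  have : NullSingletonClass (P.map X) := by rw [hdens]; infer_instance
  obtain ⟨c, hc⟩ := exists_cdf_eq (μ := P.map X) hp
  rw [cdf_eq_real, map_measureReal_apply hXmeas measurableSet_Iic] at hc
  have arbitrarily_low (r : ℝ) : ∃ g, memGcm P X γ x₀ g ∧ VaR P p (fun ω => g (X ω)) ≤ r :=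
    exists_memGcm_VaR_le hXmeas hγpos hγint hp.1 hc.ge (hc.trans_lt hp.2) x₀ r
  constructor
  · rintro ⟨b, hb⟩
    obtain ⟨g, hg, hle⟩ := arbitrarily_low (b - 1)
    linarith [hb ⟨g, hg, rfl⟩]
  · rintro ⟨g, hg, hmin⟩
    obtain ⟨h, hh, hle⟩ := arbitrarily_low (VaR P p (fun ω => g (X ω)) - 1)
    linarith [hmin h hh]

theorem stmt0 {Ω : Type*} [MeasurableSpace Ω] (P : Measure Ω) [IsProbabilityMeasure P]
    (hPatomless : Atomless P)
    (X : Ω → ℝ) (hXmeas : Measurable X) (hXnonneg : ∀ᵐ ω ∂P, 0 ≤ X ω)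
    (hXdens : HasPositiveDensityOnSupport (Measure.map X P))
    (γ : ℝ → ℝ) (hγcont : Continuous γ) (hγpos : ∀ x, 0 < γ x)
    (hγint : Integrable (fun ω => γ (X ω)) P)
    (hγ1 : ∫ ω, γ (X ω) ∂P = 1)
    (hγXint : Integrable (fun ω => γ (X ω) * X ω) P)
    (p : ℝ) (hp : p ∈ Set.Ioo (0 : ℝ) 1)
    (x₀ : ℝ) :
    ¬ BddBelow {v : ℝ | ∃ g : ℝ → ℝ, memGcm P X γ x₀ g ∧ v = VaR P p (fun ω => g (X ω))} ∧
    ¬ ∃ g : ℝ → ℝ, memGcm P X γ x₀ g ∧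
        ∀ h : ℝ → ℝ, memGcm P X γ x₀ h →
          VaR P p (fun ω => g (X ω)) ≤ VaR P p (fun ω => h (X ω)) :=
  stmt0_general P X hXmeas hXdens γ hγpos hγint p hp x₀
end

section
/- Let 0 ≤ x₀ < 𝔼[γ(X)·X], let 𝒢_ns be the set of measurable g : ℝ → ℝ with 𝔼[γ(X)·g(X)] ≥ x₀ and 0 ≤ g(X) ≤ X almost surely, and set q := inf{VaR_p(g(X)) : g ∈ 𝒢_ns}. Then q = 0 if and only if ES_p(γ(X)·X) ≥ x₀/(1−p). -/
open MeasureTheory Filter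
open scoped ENNReal Topology Classical

section AuxLemmas

variable {Ω : Type*} [MeasurableSpace Ω] (P : Measure Ω) [IsProbabilityMeasure P] {Z : Ω → ℝ}

lemma one_div_succ_anti' {n m : ℕ} (h : n ≤ m) : 1 / ((m : ℝ) + 1) ≤ 1 / ((n : ℝ) + 1) := by
  apply one_div_le_one_div_of_le
  · positivity
  · have : (n : ℝ) ≤ (m : ℝ) := by exact_mod_cast h
    linarith

lemma one_sub_ofReal' {p : ℝ} (hp : 0 ≤ p) :
    (1 : ℝ≥0∞) - ENNReal.ofReal p = ENNReal.ofReal (1 - p) := by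
  rw [← ENNReal.ofReal_one, ← ENNReal.ofReal_sub _ hp]

lemma mem_VaRset_nonneg (hZnn : ∀ᵐ ω ∂P, 0 ≤ Z ω) {u x : ℝ} (hu : 0 < u)
    (hx : u ≤ (P {ω | Z ω ≤ x}).toReal) : 0 ≤ x := by
  by_contra hneg
  push_neg at hneg
  have h0 : P {ω | Z ω ≤ x} = 0 := by
    rw [← le_zero_iff]
    calc P {ω | Z ω ≤ x} ≤ P {ω | ¬ 0 ≤ Z ω} := by
          refine measure_mono fun ω hω => ?_
          simp only [Set.mem_setOf_eq, not_le] at *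
          linarith
      _ = 0 := by rw [← ae_iff.mp hZnn]
  rw [h0] at hx
  simp only [ENNReal.toReal_zero] at hx
  linarith

lemma VaR_nonneg (hZnn : ∀ᵐ ω ∂P, 0 ≤ Z ω) {u : ℝ} (hu : 0 < u) : 0 ≤ VaR P u Z :=
  Real.sInf_nonneg fun _ hx => mem_VaRset_nonneg P hZnn hu hx

lemma VaRset_bddBelow (hZnn : ∀ᵐ ω ∂P, 0 ≤ Z ω) {u : ℝ} (hu : 0 < u) :
    BddBelow {x : ℝ | u ≤ (P {ω | Z ω ≤ x}).toReal} :=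
  ⟨0, fun _ hx => mem_VaRset_nonneg P hZnn hu hx⟩

lemma cdf_mono {x y : ℝ} (h : x ≤ y) : P {ω | Z ω ≤ x} ≤ P {ω | Z ω ≤ y} :=
  measure_mono fun ω hω => le_trans hω h

lemma VaRset_nonempty {u : ℝ} (hu1 : u < 1) : ∃ x : ℝ, u ≤ (P {ω | Z ω ≤ x}).toReal := by
  have hmono : Monotone (fun n : ℕ => {ω | Z ω ≤ (n : ℝ)}) := by
    intro n m hnm ω hω
    simp only [Set.mem_setOf_eq] at *
    exact le_trans hω (by exact_mod_cast hnm)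
  have hU : ⋃ n : ℕ, {ω | Z ω ≤ (n : ℝ)} = Set.univ := by
    ext ω
    simp only [Set.mem_iUnion, Set.mem_setOf_eq, Set.mem_univ, iff_true]
    exact exists_nat_ge (Z ω)
  have hten := tendsto_measure_iUnion_atTop (μ := P) hmono
  rw [hU, measure_univ] at hten
  have hlt : ENNReal.ofReal u < 1 := ENNReal.ofReal_lt_one.mpr hu1
  obtain ⟨n, hn⟩ := (hten.eventually_const_lt hlt).exists
  exact ⟨n, (ENNReal.ofReal_le_iff_le_toReal (measure_ne_top _ _)).mp hn.le⟩

lemma cdf_right_cont (hZ : Measurable Z) (t : ℝ) :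
    Tendsto (fun n : ℕ => P {ω | Z ω ≤ t + 1 / ((n : ℝ) + 1)}) atTop (𝓝 (P {ω | Z ω ≤ t})) := by
  have hanti : Antitone (fun n : ℕ => {ω | Z ω ≤ t + 1 / ((n : ℝ) + 1)}) := by
    intro n m hnm ω hω
    simp only [Set.mem_setOf_eq] at *
    linarith [one_div_succ_anti' hnm]
  have h := tendsto_measure_iInter_atTop (μ := P)
    (s := fun n : ℕ => {ω | Z ω ≤ t + 1 / ((n : ℝ) + 1)})
    (fun n => (hZ measurableSet_Iic).nullMeasurableSet) hanti ⟨0, measure_ne_top _ _⟩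
  have hI : ⋂ n : ℕ, {ω | Z ω ≤ t + 1 / ((n : ℝ) + 1)} = {ω | Z ω ≤ t} := by
    ext ω
    simp only [Set.mem_iInter, Set.mem_setOf_eq]
    constructor
    · intro h'
      refine le_of_forall_pos_le_add fun ε hε => ?_
      obtain ⟨n, hn⟩ := exists_nat_one_div_lt hε
      linarith [h' n]
    · intro h' n
      have hpos : (0 : ℝ) < 1 / ((n : ℝ) + 1) := by positivity
      linarith
  rwa [hI] at h

lemma VaR_le_iff (hZ : Measurable Z) (hZnn : ∀ᵐ ω ∂P, 0 ≤ Z ω) {u : ℝ} (hu : 0 < u)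
    (hu1 : u < 1) (t : ℝ) :
    VaR P u Z ≤ t ↔ u ≤ (P {ω | Z ω ≤ t}).toReal := by
  constructor
  · intro hle
    have hne : {x : ℝ | u ≤ (P {ω | Z ω ≤ x}).toReal}.Nonempty := VaRset_nonempty P hu1
    have key : ∀ n : ℕ, ENNReal.ofReal u ≤ P {ω | Z ω ≤ t + 1 / ((n : ℝ) + 1)} := by
      intro n
      have hpos : (0 : ℝ) < 1 / ((n : ℝ) + 1) := by positivity
      by_contra hcon
      push_neg at hcon
      have hallge : ∀ x ∈ {x : ℝ | u ≤ (P {ω | Z ω ≤ x}).toReal}, t + 1 / ((n : ℝ) + 1) ≤ x := by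
        intro x hx
        by_contra hxlt
        push_neg at hxlt
        have h1 : u ≤ (P {ω | Z ω ≤ t + 1 / ((n : ℝ) + 1)}).toReal :=
          le_trans hx (ENNReal.toReal_mono (measure_ne_top _ _) (cdf_mono P hxlt.le))
        exact absurd ((ENNReal.ofReal_le_iff_le_toReal (measure_ne_top _ _)).mpr h1)
          (not_le.mpr hcon)
      have h2 : t + 1 / ((n : ℝ) + 1) ≤ VaR P u Z := le_csInf hne hallge
      have h3 : VaR P u Z ≤ t := hle
      linarith
    have hlim := cdf_right_cont P hZ t
    have h4 : ENNReal.ofReal u ≤ P {ω | Z ω ≤ t} := ge_of_tendsto' hlim key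
    exact (ENNReal.ofReal_le_iff_le_toReal (measure_ne_top _ _)).mp h4
  · intro h
    exact csInf_le (VaRset_bddBelow P hZnn hu) h

lemma lt_VaR_iff (hZ : Measurable Z) (hZnn : ∀ᵐ ω ∂P, 0 ≤ Z ω) {u : ℝ} (hu : 0 < u)
    (hu1 : u < 1) (t : ℝ) :
    t < VaR P u Z ↔ (P {ω | Z ω ≤ t}).toReal < u := by
  constructor
  · intro h
    by_contra hc
    push_neg at hc
    exact absurd ((VaR_le_iff P hZ hZnn hu hu1 t).mpr hc) (not_le.mpr h)
  · intro h
    by_contra hc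
    push_neg at hc
    exact absurd ((VaR_le_iff P hZ hZnn hu hu1 t).mp hc) (not_le.mpr h)

lemma meas_gt (hZ : Measurable Z) (t : ℝ) :
    P {ω | t < Z ω} = ENNReal.ofReal (1 - (P {ω | Z ω ≤ t}).toReal) := by
  have hc : {ω | t < Z ω} = {ω | Z ω ≤ t}ᶜ := by
    ext ω; simp [not_le]
  have hms : MeasurableSet {ω | Z ω ≤ t} := hZ measurableSet_Iic
  rw [hc, prob_compl_eq_one_sub hms,
    ENNReal.ofReal_sub _ ENNReal.toReal_nonneg, ENNReal.ofReal_one,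
    ENNReal.ofReal_toReal (measure_ne_top _ _)]

end AuxLemmas
section AuxLemmas2

variable {Ω : Type*} [MeasurableSpace Ω] (P : Measure Ω) [IsProbabilityMeasure P] {Z : Ω → ℝ}

lemma lintegral_min_ne_top (hZ : Measurable Z) (hZnn : ∀ᵐ ω ∂P, 0 ≤ Z ω)
    (hZint : Integrable Z P) (p : ℝ) :
    ∫⁻ t in Set.Ioi (0 : ℝ), min (ENNReal.ofReal (1 - p)) (P {ω | t < Z ω}) ≠ ⊤ := by
  have h1 : ∫⁻ t in Set.Ioi (0 : ℝ), min (ENNReal.ofReal (1 - p)) (P {ω | t < Z ω})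
      ≤ ∫⁻ t in Set.Ioi (0 : ℝ), P {ω | t < Z ω} := lintegral_mono fun t => min_le_right _ _
  have h2 : ∫⁻ t in Set.Ioi (0 : ℝ), P {ω | t < Z ω} = ∫⁻ ω, ENNReal.ofReal (Z ω) ∂P :=
    (lintegral_eq_lintegral_meas_lt P hZnn hZ.aemeasurable).symm
  have h3 : ∫⁻ ω, ENNReal.ofReal (Z ω) ∂P < ⊤ := by
    calc ∫⁻ ω, ENNReal.ofReal (Z ω) ∂P ≤ ∫⁻ ω, (‖Z ω‖₊ : ℝ≥0∞) ∂P :=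
        lintegral_mono fun ω => Real.ofReal_le_enorm (Z ω)
      _ < ⊤ := hZint.hasFiniteIntegral
  exact ((h1.trans h2.le).trans_lt h3).ne

lemma integral_indicator_le (hZ : Measurable Z) (hZnn : ∀ᵐ ω ∂P, 0 ≤ Z ω)
    (hZint : Integrable Z P) {p : ℝ} {A : Set Ω} (hAmeas : MeasurableSet A)
    (hPA : P A ≤ ENNReal.ofReal (1 - p)) :
    ∫ ω, A.indicator Z ω ∂P
      ≤ (∫⁻ t in Set.Ioi (0 : ℝ), min (ENNReal.ofReal (1 - p)) (P {ω | t < Z ω})).toReal := by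
  have hVnn : 0 ≤ᵐ[P] A.indicator Z :=
    hZnn.mono fun ω h => Set.indicator_apply_nonneg fun _ => h
  have hVmeas : Measurable (A.indicator Z) := hZ.indicator hAmeas
  rw [integral_eq_lintegral_of_nonneg_ae hVnn hVmeas.aestronglyMeasurable]
  refine ENNReal.toReal_mono (lintegral_min_ne_top P hZ hZnn hZint p) ?_
  rw [lintegral_eq_lintegral_meas_lt P hVnn hVmeas.aemeasurable]
  refine lintegral_mono_ae ?_
  rw [ae_restrict_iff' measurableSet_Ioi]
  refine Filter.Eventually.of_forall fun t ht => ?_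
  have ht0 : (0 : ℝ) < t := ht
  refine le_min ?_ ?_
  · refine le_trans (measure_mono ?_) hPA
    intro ω hω
    by_contra hωA
    rw [Set.mem_setOf_eq, Set.indicator_of_notMem hωA] at hω
    linarith
  · refine measure_mono fun ω hω => ?_
    rw [Set.mem_setOf_eq] at hω ⊢
    by_cases hωA : ω ∈ A
    · rwa [Set.indicator_of_mem hωA] at hω
    · rw [Set.indicator_of_notMem hωA] at hω; linarith

lemma integral_indicator_eq (hZ : Measurable Z) (hZnn : ∀ᵐ ω ∂P, 0 ≤ Z ω) {p : ℝ}
    (hp0 : 0 < p) (hp1 : p < 1) {A : Set Ω} (hAmeas : MeasurableSet A)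
    (hPA : P A = ENNReal.ofReal (1 - p))
    (hsub1 : {ω | VaR P p Z < Z ω} ⊆ A) (hsub2 : A ⊆ {ω | VaR P p Z ≤ Z ω}) :
    ∫ ω, A.indicator Z ω ∂P
      = (∫⁻ t in Set.Ioi (0 : ℝ), min (ENNReal.ofReal (1 - p)) (P {ω | t < Z ω})).toReal := by
  set c := VaR P p Z with hc
  have hVnn : 0 ≤ᵐ[P] A.indicator Z :=
    hZnn.mono fun ω h => Set.indicator_apply_nonneg fun _ => h
  have hVmeas : Measurable (A.indicator Z) := hZ.indicator hAmeas
  rw [integral_eq_lintegral_of_nonneg_ae hVnn hVmeas.aestronglyMeasurable]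
  congr 1
  rw [lintegral_eq_lintegral_meas_lt P hVnn hVmeas.aemeasurable]
  refine lintegral_congr_ae ?_
  rw [Filter.EventuallyEq, ae_restrict_iff' measurableSet_Ioi]
  refine Filter.Eventually.of_forall fun t ht => ?_
  have ht0 : (0 : ℝ) < t := ht
  rcases lt_or_ge t c with htc | htc
  · have hset : {ω | t < A.indicator Z ω} = A := by
      ext ω
      simp only [Set.mem_setOf_eq]
      constructor
      · intro hω
        by_contra hωA
        rw [Set.indicator_of_notMem hωA] at hω
        linarith
      · intro hω
        rw [Set.indicator_of_mem hω]
        exact lt_of_lt_of_le htc (hsub2 hω)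
    rw [hset, hPA]
    refine (min_eq_left ?_).symm
    rw [meas_gt P hZ t]
    refine ENNReal.ofReal_le_ofReal ?_
    have hFt : (P {ω | Z ω ≤ t}).toReal < p := (lt_VaR_iff P hZ hZnn hp0 hp1 t).mp htc
    linarith
  · have hset : {ω | t < A.indicator Z ω} = {ω | t < Z ω} := by
      ext ω
      simp only [Set.mem_setOf_eq]
      constructor
      · intro hω
        by_cases hωA : ω ∈ A
        · rwa [Set.indicator_of_mem hωA] at hω
        · rw [Set.indicator_of_notMem hωA] at hω; linarith
      · intro hω
        have hωA : ω ∈ A := hsub1 (lt_of_le_of_lt htc hω)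
        rwa [Set.indicator_of_mem hωA]
    rw [hset]
    refine (min_eq_right ?_).symm
    rw [meas_gt P hZ t]
    have hFc : p ≤ (P {ω | Z ω ≤ c}).toReal := (VaR_le_iff P hZ hZnn hp0 hp1 c).mp le_rfl
    have hFmono : (P {ω | Z ω ≤ c}).toReal ≤ (P {ω | Z ω ≤ t}).toReal :=
      ENNReal.toReal_mono (measure_ne_top P _) (cdf_mono P htc)
    exact ENNReal.ofReal_le_ofReal (by linarith)

lemma setIntegral_VaR_eq (hZ : Measurable Z) (hZnn : ∀ᵐ ω ∂P, 0 ≤ Z ω) {p : ℝ}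
    (hp0 : 0 < p) (hp1 : p < 1) :
    ∫ u in Set.Ioo p 1, VaR P u Z
      = (∫⁻ t in Set.Ioi (0 : ℝ), min (ENNReal.ofReal (1 - p)) (P {ω | t < Z ω})).toReal := by
  classical
  set F : ℝ → ℝ := fun t => (P {ω | Z ω ≤ t}).toReal with hFdef
  have hFmono : Monotone F := fun x y hxy =>
    ENNReal.toReal_mono (measure_ne_top _ _) (cdf_mono P hxy)
  have hFmeas : Measurable F := hFmono.measurable
  set s : Set (ℝ × ℝ) := {z | F z.2 < z.1} with hsdef
  have hsm : MeasurableSet s := measurableSet_lt (hFmeas.comp measurable_snd) measurable_fst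
  have hvol : ∀ u ∈ Set.Ioo p 1,
      volume.restrict (Set.Ioi (0 : ℝ)) {t | F t < u} = ENNReal.ofReal (VaR P u Z) := by
    intro u hu
    have hms : MeasurableSet {t | F t < u} := hFmeas measurableSet_Iio
    rw [Measure.restrict_apply hms]
    have hset : {t | F t < u} ∩ Set.Ioi 0 = Set.Ioo 0 (VaR P u Z) := by
      ext t
      simp only [Set.mem_inter_iff, Set.mem_setOf_eq, Set.mem_Ioi, Set.mem_Ioo]
      constructor
      · rintro ⟨hFt, ht⟩
        exact ⟨ht, (lt_VaR_iff P hZ hZnn (hp0.trans hu.1) hu.2 t).mpr hFt⟩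
      · rintro ⟨ht, hlt⟩
        exact ⟨(lt_VaR_iff P hZ hZnn (hp0.trans hu.1) hu.2 t).mp hlt, ht⟩
    rw [hset, Real.volume_Ioo, sub_zero]
  set G : ℝ → ℝ := fun u => (volume.restrict (Set.Ioi (0 : ℝ)) (Prod.mk u ⁻¹' s)).toReal
    with hGdef
  have hGmeas : Measurable G :=
    (measurable_measure_prodMk_left (ν := volume.restrict (Set.Ioi (0 : ℝ))) hsm).ennreal_toReal
  have hGq : ∀ u ∈ Set.Ioo p 1, G u = VaR P u Z := by
    intro u hu
    have hpre : Prod.mk u ⁻¹' s = {t | F t < u} := rfl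
    show (volume.restrict (Set.Ioi (0 : ℝ)) (Prod.mk u ⁻¹' s)).toReal = VaR P u Z
    rw [hpre, hvol u hu, ENNReal.toReal_ofReal (VaR_nonneg P hZnn (hp0.trans hu.1))]
  have haeq : (fun u => VaR P u Z) =ᵐ[volume.restrict (Set.Ioo p 1)] G := by
    rw [Filter.EventuallyEq, ae_restrict_iff' measurableSet_Ioo]
    exact Filter.Eventually.of_forall fun u hu => (hGq u hu).symm
  have hVaRnn : 0 ≤ᵐ[volume.restrict (Set.Ioo p 1)] fun u => VaR P u Z := by
    rw [Filter.EventuallyLE, ae_restrict_iff' measurableSet_Ioo]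
    exact Filter.Eventually.of_forall fun u hu => VaR_nonneg P hZnn (hp0.trans hu.1)
  have hVaRmeas : AEMeasurable (fun u => VaR P u Z) (volume.restrict (Set.Ioo p 1)) :=
    hGmeas.aemeasurable.congr haeq.symm
  rw [integral_eq_lintegral_of_nonneg_ae hVaRnn hVaRmeas.aestronglyMeasurable]
  congr 1
  have hA1 : ∫⁻ u in Set.Ioo p 1, ENNReal.ofReal (VaR P u Z)
      = (volume.restrict (Set.Ioo p 1)).prod (volume.restrict (Set.Ioi (0 : ℝ))) s := by
    rw [Measure.prod_apply hsm]
    refine lintegral_congr_ae ?_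
    rw [Filter.EventuallyEq, ae_restrict_iff' measurableSet_Ioo]
    exact Filter.Eventually.of_forall fun u hu => (hvol u hu).symm
  have hA2 : (volume.restrict (Set.Ioo p 1)).prod (volume.restrict (Set.Ioi (0 : ℝ))) s
      = ∫⁻ t in Set.Ioi (0 : ℝ), min (ENNReal.ofReal (1 - p)) (P {ω | t < Z ω}) := by
    rw [Measure.prod_apply_symm hsm]
    refine lintegral_congr_ae (Filter.Eventually.of_forall fun t => ?_)
    show (volume.restrict (Set.Ioo p 1)) ((fun u => (u, t)) ⁻¹' s)
      = min (ENNReal.ofReal (1 - p)) (P {ω | t < Z ω})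
    have hpre : (fun u => (u, t)) ⁻¹' s = Set.Ioi (F t) := rfl
    rw [hpre, Measure.restrict_apply measurableSet_Ioi]
    have hFt0 : 0 ≤ F t := ENNReal.toReal_nonneg
    have hFt1 : F t ≤ 1 := by
      have h := prob_le_one (μ := P) (s := {ω | Z ω ≤ t})
      calc F t ≤ (1 : ℝ≥0∞).toReal := ENNReal.toReal_mono ENNReal.one_ne_top h
        _ = 1 := ENNReal.toReal_one
    have hset : Set.Ioi (F t) ∩ Set.Ioo p 1 = Set.Ioo (max p (F t)) 1 := by
      ext u
      simp only [Set.mem_inter_iff, Set.mem_Ioi, Set.mem_Ioo, max_lt_iff]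
      tauto
    rw [hset, Real.volume_Ioo, meas_gt P hZ t]
    rcases le_total p (F t) with hpf | hpf
    · rw [max_eq_right hpf, min_eq_right (ENNReal.ofReal_le_ofReal (by linarith))]
    · rw [max_eq_left hpf, min_eq_left (ENNReal.ofReal_le_ofReal (by linarith))]
  rw [hA1, hA2]

end AuxLemmas2
section AuxLemmas3

lemma exists_set_measure_eq' (ρ : MeasureTheory.Measure ℝ) [IsFiniteMeasure ρ]
    (hat : ∀ x : ℝ, ρ {x} = 0) {m : ℝ≥0∞} (hm : m ≤ ρ Set.univ) :
    ∃ D : Set ℝ, MeasurableSet D ∧ ρ D = m := by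
  rcases eq_or_lt_of_le hm with heq | hlt
  · exact ⟨Set.univ, MeasurableSet.univ, heq.symm⟩
  rcases eq_or_ne m 0 with h0 | h0
  · exact ⟨∅, MeasurableSet.empty, by simp [h0]⟩
  have hmpos : (0 : ℝ≥0∞) < m := pos_iff_ne_zero.mpr h0
  set S : Set ℝ := {s : ℝ | m ≤ ρ (Set.Iic s)} with hS
  have hne : S.Nonempty := by
    have hmono : Monotone (fun n : ℕ => Set.Iic (n : ℝ)) := fun a b hab =>
      Set.Iic_subset_Iic.mpr (by exact_mod_cast hab)
    have hU : ⋃ n : ℕ, Set.Iic (n : ℝ) = Set.univ := by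
      ext x
      simp only [Set.mem_iUnion, Set.mem_Iic, Set.mem_univ, iff_true]
      exact exists_nat_ge x
    have hten := tendsto_measure_iUnion_atTop (μ := ρ) hmono
    rw [hU] at hten
    obtain ⟨n, hn⟩ := (hten.eventually_const_lt hlt).exists
    exact ⟨n, hn.le⟩
  have hbdd : BddBelow S := by
    have hanti : Antitone (fun n : ℕ => Set.Iic (-(n : ℝ))) := fun a b hab =>
      Set.Iic_subset_Iic.mpr (neg_le_neg (by exact_mod_cast hab))
    have hI : ⋂ n : ℕ, Set.Iic (-(n : ℝ)) = ∅ := by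
      ext x
      simp only [Set.mem_iInter, Set.mem_Iic, Set.mem_empty_iff_false, iff_false]
      push_neg
      obtain ⟨n, hn⟩ := exists_nat_gt (-x)
      exact ⟨n, by linarith⟩
    have hten := tendsto_measure_iInter_atTop (μ := ρ)
      (s := fun n : ℕ => Set.Iic (-(n : ℝ)))
      (fun n => measurableSet_Iic.nullMeasurableSet) hanti ⟨0, measure_ne_top _ _⟩
    rw [hI, measure_empty] at hten
    obtain ⟨n, hn⟩ := (hten.eventually_lt_const hmpos).exists
    refine ⟨-(n : ℝ), fun x hx => ?_⟩
    by_contra hlt'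
    push_neg at hlt'
    have h1 : ρ (Set.Iic x) ≤ ρ (Set.Iic (-(n : ℝ))) :=
      measure_mono (Set.Iic_subset_Iic.mpr hlt'.le)
    exact absurd (hx.trans h1) (not_le.mpr hn)
  set s₀ := sInf S with hs₀
  have hge : m ≤ ρ (Set.Iic s₀) := by
    have key : ∀ n : ℕ, m ≤ ρ (Set.Iic (s₀ + 1 / ((n : ℝ) + 1))) := by
      intro n
      have hpos : (0 : ℝ) < 1 / ((n : ℝ) + 1) := by positivity
      obtain ⟨x, hxS, hxlt⟩ := (csInf_lt_iff hbdd hne).mp (by linarith : sInf S < s₀ + 1 / ((n : ℝ) + 1))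
      exact hxS.trans (measure_mono (Set.Iic_subset_Iic.mpr hxlt.le))
    have hanti : Antitone (fun n : ℕ => Set.Iic (s₀ + 1 / ((n : ℝ) + 1))) := fun a b hab =>
      Set.Iic_subset_Iic.mpr (by linarith [one_div_succ_anti' hab])
    have hI : ⋂ n : ℕ, Set.Iic (s₀ + 1 / ((n : ℝ) + 1)) = Set.Iic s₀ := by
      ext x
      simp only [Set.mem_iInter, Set.mem_Iic]
      constructor
      · intro h'
        refine le_of_forall_pos_le_add fun ε hε => ?_
        obtain ⟨n, hn⟩ := exists_nat_one_div_lt hε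
        linarith [h' n]
      · intro h' n
        have hpos : (0 : ℝ) < 1 / ((n : ℝ) + 1) := by positivity
        linarith
    have hten := tendsto_measure_iInter_atTop (μ := ρ)
      (s := fun n : ℕ => Set.Iic (s₀ + 1 / ((n : ℝ) + 1)))
      (fun n => measurableSet_Iic.nullMeasurableSet) hanti ⟨0, measure_ne_top _ _⟩
    rw [hI] at hten
    exact ge_of_tendsto' hten key
  have hle2 : ρ (Set.Iic s₀) ≤ m := by
    have key : ∀ n : ℕ, ρ (Set.Iic (s₀ - 1 / ((n : ℝ) + 1))) ≤ m := by
      intro n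
      have hpos : (0 : ℝ) < 1 / ((n : ℝ) + 1) := by positivity
      have hnotin : s₀ - 1 / ((n : ℝ) + 1) ∉ S := by
        intro hmem
        have := csInf_le hbdd hmem
        rw [← hs₀] at this
        linarith
      exact (not_le.mp hnotin).le
    have hmono : Monotone (fun n : ℕ => Set.Iic (s₀ - 1 / ((n : ℝ) + 1))) := fun a b hab =>
      Set.Iic_subset_Iic.mpr (by linarith [one_div_succ_anti' hab])
    have hU : ⋃ n : ℕ, Set.Iic (s₀ - 1 / ((n : ℝ) + 1)) = Set.Iio s₀ := by
      ext x
      simp only [Set.mem_iUnion, Set.mem_Iic, Set.mem_Iio]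
      constructor
      · rintro ⟨n, hn⟩
        have hpos : (0 : ℝ) < 1 / ((n : ℝ) + 1) := by positivity
        linarith
      · intro hx
        obtain ⟨n, hn⟩ := exists_nat_one_div_lt (by linarith : (0 : ℝ) < s₀ - x)
        exact ⟨n, by linarith⟩
    have hten := tendsto_measure_iUnion_atTop (μ := ρ) hmono
    rw [hU] at hten
    have h1 : ρ (Set.Iio s₀) ≤ m := le_of_tendsto' hten key
    have h2 : ρ (Set.Iic s₀) = ρ (Set.Iio s₀) := by
      rw [← Set.Iio_union_right, measure_union (by simp) (measurableSet_singleton _),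
        hat s₀, add_zero]
    rw [h2]
    exact h1
  exact ⟨Set.Iic s₀, measurableSet_Iic, le_antisymm hle2 hge⟩

end AuxLemmas3
section AuxLemmas4

variable {Ω : Type*} [MeasurableSpace Ω] (P : Measure Ω) [IsProbabilityMeasure P]

lemma exists_split (X : Ω → ℝ) (hXmeas : Measurable X)
    (hXdens : HasPositiveDensityOnSupport (Measure.map X P))
    (h : ℝ → ℝ) (hhmeas : Measurable h) (c : ℝ) (p : ℝ)
    (h1 : P {ω | c < h (X ω)} ≤ ENNReal.ofReal (1 - p))
    (h2 : ENNReal.ofReal (1 - p) ≤ P {ω | c ≤ h (X ω)}) :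
    ∃ B : Set ℝ, MeasurableSet B ∧ {x | c < h x} ⊆ B ∧ B ⊆ {x | c ≤ h x} ∧
      P {ω | X ω ∈ B} = ENNReal.ofReal (1 - p) := by
  classical
  set μ := Measure.map X P with hμdef
  haveI : IsProbabilityMeasure μ := Measure.isProbabilityMeasure_map hXmeas.aemeasurable
  have hatom : ∀ x : ℝ, μ {x} = 0 := by
    obtain ⟨f, hf, hfd, -⟩ := hXdens
    intro x
    rw [hμdef] at hfd ⊢
    rw [hfd, withDensity_apply _ (measurableSet_singleton x)]
    exact setLIntegral_measure_zero _ _ (Real.volume_singleton)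
  set Sgt := {x | c < h x} with hSgt
  set Seq := {x | h x = c} with hSeq
  have hSgtm : MeasurableSet Sgt := hhmeas measurableSet_Ioi
  have hSeqm : MeasurableSet Seq := hhmeas (measurableSet_singleton c)
  have hmap : ∀ B : Set ℝ, MeasurableSet B → μ B = P {ω | X ω ∈ B} := fun B hB =>
    Measure.map_apply hXmeas hB
  have h1' : μ Sgt ≤ ENNReal.ofReal (1 - p) := by
    rw [hmap Sgt hSgtm]; exact h1
  have hge' : ENNReal.ofReal (1 - p) ≤ μ Sgt + μ Seq := by
    have hsub : {x | c ≤ h x} ⊆ Sgt ∪ Seq := by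
      intro x hx
      have hx' : c ≤ h x := hx
      rcases lt_or_eq_of_le hx' with h' | h'
      · exact Or.inl h'
      · exact Or.inr h'.symm
    have hle : μ {x | c ≤ h x} ≤ μ Sgt + μ Seq :=
      le_trans (measure_mono hsub) (measure_union_le _ _)
    refine le_trans ?_ hle
    rw [hmap {x | c ≤ h x} (hhmeas measurableSet_Ici)]
    exact h2
  set ρ := μ.restrict Seq with hρdef
  have hρat : ∀ x : ℝ, ρ {x} = 0 := by
    intro x
    rw [hρdef, Measure.restrict_apply (measurableSet_singleton x)]
    exact le_antisymm ((measure_mono Set.inter_subset_left).trans (hatom x).le) (by simp)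
  set m := ENNReal.ofReal (1 - p) - μ Sgt with hmdef
  have hmle : m ≤ ρ Set.univ := by
    rw [hρdef, Measure.restrict_apply MeasurableSet.univ, Set.univ_inter]
    exact tsub_le_iff_left.mpr hge'
  obtain ⟨D, hDmeas, hDval⟩ := exists_set_measure_eq' ρ hρat hmle
  refine ⟨Sgt ∪ (Seq ∩ D), hSgtm.union (hSeqm.inter hDmeas), Set.subset_union_left, ?_, ?_⟩
  · rintro x (hx | ⟨hx, -⟩)
    · have hx' : c < h x := hx
      exact le_of_lt hx'
    · have hx' : h x = c := hx
      exact hx'.symm.le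
  · rw [← hmap _ (hSgtm.union (hSeqm.inter hDmeas)),
      measure_union ?_ (hSeqm.inter hDmeas)]
    · have hρD : μ (Seq ∩ D) = ρ D := by
        rw [hρdef, Measure.restrict_apply hDmeas, Set.inter_comm]
      rw [hρD, hDval, hmdef, add_tsub_cancel_of_le h1']
    · refine Set.disjoint_left.mpr fun x hx hx2 => ?_
      exact (ne_of_gt hx) hx2.1
end AuxLemmas4


theorem stmt2 {Ω : Type*} [MeasurableSpace Ω] (P : Measure Ω) [IsProbabilityMeasure P]
    (hPatomless : Atomless P)
    (X : Ω → ℝ) (hXmeas : Measurable X) (hXnonneg : ∀ᵐ ω ∂P, 0 ≤ X ω)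
    (hXdens : HasPositiveDensityOnSupport (Measure.map X P))
    (γ : ℝ → ℝ) (hγcont : Continuous γ) (hγpos : ∀ x, 0 < γ x)
    (hγint : Integrable (fun ω => γ (X ω)) P)
    (hγ1 : ∫ ω, γ (X ω) ∂P = 1)
    (hγXint : Integrable (fun ω => γ (X ω) * X ω) P)
    (p : ℝ) (hp : p ∈ Set.Ioo (0 : ℝ) 1)
    (x₀ : ℝ) (hx₀ : 0 ≤ x₀) (hx₀lt : x₀ < ∫ ω, γ (X ω) * X ω ∂P)
    (q : ℝ)
    (hq : q = sInf {v : ℝ | ∃ g : ℝ → ℝ, memGns P X γ x₀ g ∧ v = VaR P p (fun ω => g (X ω))}) :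
    q = 0 ↔ x₀ / (1 - p) ≤ ES P p (fun ω => γ (X ω) * X ω) := by
  classical
  obtain ⟨hp0, hp1⟩ := hp
  have h1p : (0 : ℝ) < 1 - p := by linarith
  set Z : Ω → ℝ := fun ω => γ (X ω) * X ω with hZdef
  have hZmeas : Measurable Z := (hγcont.measurable.comp hXmeas).mul hXmeas
  have hZnn : ∀ᵐ ω ∂P, 0 ≤ Z ω := hXnonneg.mono fun ω h => mul_nonneg (hγpos _).le h
  have hZint : Integrable Z P := hγXint
  set M := ∫⁻ t in Set.Ioi (0 : ℝ), min (ENNReal.ofReal (1 - p)) (P {ω | t < Z ω}) with hMdef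
  have hMne : M ≠ ⊤ := lintegral_min_ne_top P hZmeas hZnn hZint p
  have hES : ES P p Z = (1 - p)⁻¹ * M.toReal := by
    rw [ES]
    congr 1
    rw [intervalIntegral.integral_of_le hp1.le, integral_Ioc_eq_integral_Ioo]
    exact setIntegral_VaR_eq P hZmeas hZnn hp0 hp1
  have hRHS : (x₀ / (1 - p) ≤ ES P p Z) ↔ x₀ ≤ M.toReal := by
    rw [hES]
    have hdiv : (1 - p)⁻¹ * M.toReal = M.toReal / (1 - p) := by ring
    rw [hdiv, div_le_div_iff_of_pos_right h1p]
  rw [hRHS]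
  set VS := {v : ℝ | ∃ g : ℝ → ℝ, memGns P X γ x₀ g ∧ v = VaR P p fun ω => g (X ω)} with hVSdef
  have hidmem : memGns P X γ x₀ (id : ℝ → ℝ) := by
    refine ⟨measurable_id, ?_, ?_, hXnonneg.mono fun ω h => ⟨h, le_refl _⟩⟩
    · exact hγXint
    · exact hx₀lt.le
  have hVSne : VS.Nonempty := ⟨VaR P p fun ω => (id : ℝ → ℝ) (X ω), ⟨id, hidmem, rfl⟩⟩
  have hlb : ∀ v ∈ VS, 0 ≤ v := by
    rintro v ⟨g, hg, rfl⟩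
    exact VaR_nonneg P (hg.2.2.2.mono fun ω h => h.1) hp0
  rw [hq]
  constructor
  · -- q = 0 → budget bound
    intro hq0
    refine le_of_forall_pos_le_add fun ε hε => ?_
    have hvlt : ∃ v ∈ VS, v < ε := by
      by_contra hcon
      push_neg at hcon
      have h1 : ε ≤ sInf VS := le_csInf hVSne hcon
      rw [hq0] at h1
      linarith
    obtain ⟨v, hvVS, hvε⟩ := hvlt
    obtain ⟨g, hg, hveq⟩ := hvVS
    obtain ⟨hgmeas, hgint, hgbudget, hgae⟩ := hg
    set Y : Ω → ℝ := fun ω => g (X ω) with hYdef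
    have hYmeas : Measurable Y := hgmeas.comp hXmeas
    have hYnn : ∀ᵐ ω ∂P, 0 ≤ Y ω := hgae.mono fun ω h => h.1
    have hVaRlt : VaR P p Y < ε := by rw [← hveq]; exact hvε
    have hex : ∃ x : ℝ, p ≤ (P {ω | Y ω ≤ x}).toReal ∧ x < ε := by
      by_contra hcon
      push_neg at hcon
      have hSne := VaRset_nonempty P (Z := Y) hp1
      have h1 : ε ≤ VaR P p Y := le_csInf hSne fun x hx => hcon x hx
      linarith
    obtain ⟨x, hxS, hxε⟩ := hex
    have hx0 : 0 ≤ x := mem_VaRset_nonneg P hYnn hp0 hxS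
    set E := {ω | Y ω ≤ x} with hEdef
    have hEmeas : MeasurableSet E := hYmeas measurableSet_Iic
    have hPEc : P Eᶜ ≤ ENNReal.ofReal (1 - p) := by
      rw [prob_compl_eq_one_sub hEmeas]
      have hE1 : ENNReal.ofReal p ≤ P E :=
        (ENNReal.ofReal_le_iff_le_toReal (measure_ne_top _ _)).mpr hxS
      calc (1 : ℝ≥0∞) - P E ≤ 1 - ENNReal.ofReal p := tsub_le_tsub_left hE1 1
        _ = ENNReal.ofReal (1 - p) := one_sub_ofReal' hp0.le
    set φ : Ω → ℝ := fun ω => γ (X ω) * g (X ω) with hφdef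
    have hsplit : ∫ ω, φ ω ∂P = ∫ ω, E.indicator φ ω ∂P + ∫ ω, Eᶜ.indicator φ ω ∂P := by
      rw [← integral_add (hgint.indicator hEmeas) (hgint.indicator hEmeas.compl)]
      refine integral_congr_ae (Filter.Eventually.of_forall fun ω => ?_)
      exact (congrFun (Set.indicator_self_add_compl E φ) ω).symm
    have hbound1 : ∫ ω, E.indicator φ ω ∂P ≤ x := by
      have hle : E.indicator φ ≤ᵐ[P] fun ω => γ (X ω) * x := by
        refine Filter.Eventually.of_forall fun ω => ?_
        by_cases hωE : ω ∈ E
        · rw [Set.indicator_of_mem hωE]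
          have hYx : Y ω ≤ x := hωE
          exact mul_le_mul_of_nonneg_left hYx (hγpos _).le
        · rw [Set.indicator_of_notMem hωE]
          exact mul_nonneg (hγpos _).le hx0
      calc ∫ ω, E.indicator φ ω ∂P ≤ ∫ ω, γ (X ω) * x ∂P :=
            integral_mono_ae (hgint.indicator hEmeas) (hγint.mul_const x) hle
        _ = x := by rw [integral_mul_const, hγ1, one_mul]
    have hbound2 : ∫ ω, Eᶜ.indicator φ ω ∂P ≤ M.toReal := by
      have hle : Eᶜ.indicator φ ≤ᵐ[P] Eᶜ.indicator Z := by
        filter_upwards [hgae] with ω hω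
        by_cases hωE : ω ∈ Eᶜ
        · rw [Set.indicator_of_mem hωE, Set.indicator_of_mem hωE]
          exact mul_le_mul_of_nonneg_left hω.2 (hγpos _).le
        · rw [Set.indicator_of_notMem hωE, Set.indicator_of_notMem hωE]
      calc ∫ ω, Eᶜ.indicator φ ω ∂P ≤ ∫ ω, Eᶜ.indicator Z ω ∂P :=
            integral_mono_ae (hgint.indicator hEmeas.compl)
              (hZint.indicator hEmeas.compl) hle
        _ ≤ M.toReal := integral_indicator_le P hZmeas hZnn hZint hEmeas.compl hPEc
    calc x₀ ≤ ∫ ω, φ ω ∂P := hgbudget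
      _ ≤ x + M.toReal := by rw [hsplit]; exact add_le_add hbound1 hbound2
      _ ≤ M.toReal + ε := by linarith
  · -- budget bound → q = 0
    intro hx₀M
    set c := VaR P p Z with hcdef
    have hc0 : 0 ≤ c := VaR_nonneg P hZnn hp0
    have hFc : p ≤ (P {ω | Z ω ≤ c}).toReal := (VaR_le_iff P hZmeas hZnn hp0 hp1 c).mp le_rfl
    have hgtc : P {ω | c < Z ω} ≤ ENNReal.ofReal (1 - p) := by
      rw [meas_gt P hZmeas c]
      exact ENNReal.ofReal_le_ofReal (by linarith)
    have hltc : P {ω | Z ω < c} ≤ ENNReal.ofReal p := by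
      have hmono : Monotone (fun n : ℕ => {ω | Z ω ≤ c - 1 / ((n : ℝ) + 1)}) := by
        intro n m hnm ω hω
        simp only [Set.mem_setOf_eq] at *
        linarith [one_div_succ_anti' hnm]
      have hU : ⋃ n : ℕ, {ω | Z ω ≤ c - 1 / ((n : ℝ) + 1)} = {ω | Z ω < c} := by
        ext ω
        simp only [Set.mem_iUnion, Set.mem_setOf_eq]
        constructor
        · rintro ⟨n, hn⟩
          have hpos : (0 : ℝ) < 1 / ((n : ℝ) + 1) := by positivity
          linarith
        · intro hω
          obtain ⟨n, hn⟩ := exists_nat_one_div_lt (by linarith : (0 : ℝ) < c - Z ω)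
          exact ⟨n, by linarith⟩
      have hten := tendsto_measure_iUnion_atTop (μ := P) hmono
      rw [hU] at hten
      refine le_of_tendsto' hten fun n => ?_
      have hpos : (0 : ℝ) < 1 / ((n : ℝ) + 1) := by positivity
      have hFlt : (P {ω | Z ω ≤ c - 1 / ((n : ℝ) + 1)}).toReal < p :=
        (lt_VaR_iff P hZmeas hZnn hp0 hp1 _).mp (by linarith)
      have := (ENNReal.lt_ofReal_iff_toReal_lt (measure_ne_top _ _)).mpr hFlt
      exact this.le
    have hgec : ENNReal.ofReal (1 - p) ≤ P {ω | c ≤ Z ω} := by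
      have hcompl : {ω | c ≤ Z ω} = {ω | Z ω < c}ᶜ := by
        ext ω; simp [not_lt]
      have hms : MeasurableSet {ω | Z ω < c} := hZmeas measurableSet_Iio
      rw [hcompl, prob_compl_eq_one_sub hms]
      calc ENNReal.ofReal (1 - p) = 1 - ENNReal.ofReal p := (one_sub_ofReal' hp0.le).symm
        _ ≤ 1 - P {ω | Z ω < c} := tsub_le_tsub_left hltc 1
    obtain ⟨B, hBmeas, hBsub1, hBsub2, hPB⟩ :=
      exists_split P X hXmeas hXdens (fun x => γ x * x)
        (hγcont.measurable.mul measurable_id) c p hgtc hgec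
    set g : ℝ → ℝ := B.indicator id with hgdef
    have hgmeas : Measurable g := measurable_id.indicator hBmeas
    have hAmeas : MeasurableSet {ω | X ω ∈ B} := hXmeas hBmeas
    have hfun : (fun ω => γ (X ω) * g (X ω)) = Set.indicator {ω | X ω ∈ B} Z := by
      funext ω
      by_cases hω : X ω ∈ B
      · have hgω : g (X ω) = X ω := Set.indicator_of_mem hω id
        have hω' : ω ∈ {ω | X ω ∈ B} := hω
        rw [hgω, Set.indicator_of_mem hω' Z]
      · have hgω : g (X ω) = 0 := Set.indicator_of_notMem hω id
        have hω' : ω ∉ {ω | X ω ∈ B} := hω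
        rw [hgω, mul_zero, Set.indicator_of_notMem hω' Z]
    have hgint : Integrable (fun ω => γ (X ω) * g (X ω)) P := by
      rw [hfun]; exact hZint.indicator hAmeas
    have hbudget : ∫ ω, γ (X ω) * g (X ω) ∂P = M.toReal := by
      rw [hfun]
      refine integral_indicator_eq P hZmeas hZnn hp0 hp1 hAmeas hPB ?_ ?_
      · intro ω hω
        exact hBsub1 hω
      · intro ω hω
        exact hBsub2 hω
    have hmem : memGns P X γ x₀ g := by
      refine ⟨hgmeas, hgint, by rw [hbudget]; exact hx₀M, ?_⟩
      filter_upwards [hXnonneg] with ω hω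
      by_cases hωB : X ω ∈ B
      · have hgω : g (X ω) = X ω := Set.indicator_of_mem hωB id
        rw [hgω]
        exact ⟨hω, le_refl _⟩
      · have hgω : g (X ω) = 0 := Set.indicator_of_notMem hωB id
        rw [hgω]
        exact ⟨le_refl _, hω⟩
    have hYnn : ∀ᵐ ω ∂P, 0 ≤ g (X ω) :=
      hXnonneg.mono fun ω hω => Set.indicator_apply_nonneg fun _ => hω
    have hVaR0 : VaR P p (fun ω => g (X ω)) = 0 := by
      refine le_antisymm ?_ (VaR_nonneg P hYnn hp0)
      refine csInf_le (VaRset_bddBelow P hYnn hp0) ?_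
      show p ≤ (P {ω | g (X ω) ≤ 0}).toReal
      have hsub : {ω | X ω ∈ B}ᶜ ⊆ {ω | g (X ω) ≤ 0} := by
        intro ω hω
        have hgω : g (X ω) = 0 := Set.indicator_of_notMem (show X ω ∉ B from hω) id
        exact le_of_eq hgω
      have hple : ENNReal.ofReal p ≤ P {ω | g (X ω) ≤ 0} := by
        have he1 : (1 : ℝ≥0∞) - ENNReal.ofReal (1 - p) = ENNReal.ofReal p := by
          rw [one_sub_ofReal' h1p.le]
          norm_num
        calc ENNReal.ofReal p = P {ω | X ω ∈ B}ᶜ := by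
              rw [prob_compl_eq_one_sub hAmeas, hPB, he1]
          _ ≤ P {ω | g (X ω) ≤ 0} := measure_mono hsub
      exact (ENNReal.ofReal_le_iff_le_toReal (measure_ne_top _ _)).mp hple
    refine le_antisymm (csInf_le ⟨0, fun v hv => hlb v hv⟩ ⟨g, hmem, hVaR0.symm⟩)
      (le_csInf ⟨0, ⟨g, hmem, hVaR0.symm⟩⟩ hlb)
end

section
/- Let 0 ≤ x₀ < 𝔼[γ(X)·X] and suppose ES_p(γ(X)·X) ≥ x₀/(1−p). Let U be a uniform transform of X·γ(X) on (Ω, σ(X), ℙ), i.e. a σ(X)-measurable random variable uniformly distributed on [0,1] with F⁻¹_{Xγ(X)}(U) = X·γ(X) almost surely. Then the position X·𝟙_{U>p} satisfies 𝔼[γ(X)·X·𝟙_{U>p}] ≥ x₀, 0 ≤ X·𝟙_{U>p} ≤ X almost surely, and VaR_p(X·𝟙_{U>p}) = 0; hence it solves the problem of minimizing VaR_p(g(X)) over measurable g with 𝔼[γ(X)·g(X)] ≥ x₀ and 0 ≤ g(X) ≤ X almost surely. -/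
open MeasureTheory Filter
open scoped ENNReal Topology Classical

/-! Because `U` is uniform and `X γ(X) = F⁻¹_{Xγ(X)}(U)`, the price `𝔼[γ(X) X 𝟙_{U>p}]` of the
position is `∫_p^1 F⁻¹_{Xγ(X)}(u) du = (1 - p) ES_p(γ(X) X) ≥ x₀`. The position vanishes on
`{U ≤ p}`, which has probability `p`, so its `VaR_p` is `0`, the least value `VaR_p` takes on
nonnegative positions. -/

namespace VaR

variable {Ω : Type*} [MeasurableSpace Ω] {P : Measure Ω} {p : ℝ} {Y : Ω → ℝ}

lemma set_subset_Ici_zero (hp : 0 < p) (hY : 0 ≤ᵐ[P] Y) :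
    {x : ℝ | p ≤ (P {ω | Y ω ≤ x}).toReal} ⊆ Set.Ici 0 := by
  intro x hx
  rw [Set.mem_Ici]
  by_contra! hneg
  have hnull : P {ω | Y ω ≤ x} = 0 :=
    measure_mono_null (fun ω (hω : Y ω ≤ x) => not_le.mpr (hω.trans_lt hneg)) (ae_iff.mp hY)
  have : p ≤ 0 := by simpa [hnull] using hx
  linarith

lemma bddBelow_set (hp : 0 < p) (hY : 0 ≤ᵐ[P] Y) :
    BddBelow {x : ℝ | p ≤ (P {ω | Y ω ≤ x}).toReal} :=
  ⟨0, set_subset_Ici_zero hp hY⟩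

lemma nonneg (hp : 0 < p) (hY : 0 ≤ᵐ[P] Y) : 0 ≤ VaR P p Y :=
  Real.sInf_nonneg fun _ hx => set_subset_Ici_zero hp hY hx

lemma eq_zero_of_le_measure (hp : 0 < p) (hY : 0 ≤ᵐ[P] Y)
    (hmass : p ≤ (P {ω | Y ω ≤ 0}).toReal) : VaR P p Y = 0 :=
  le_antisymm (csInf_le (bddBelow_set hp hY) hmass) (nonneg hp hY)

lemma exists_le_measure [IsProbabilityMeasure P] (Y : Ω → ℝ) (hp : p < 1) :
    ∃ x : ℝ, p ≤ (P {ω | Y ω ≤ x}).toReal := by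
  have hunion : ⋃ n : ℕ, {ω | Y ω ≤ n} = Set.univ :=
    Set.eq_univ_of_forall fun ω => Set.mem_iUnion.mpr ⟨⌈Y ω⌉₊, Nat.le_ceil (Y ω)⟩
  have hmono : Monotone fun n : ℕ => {ω | Y ω ≤ n} := fun m n hmn ω (hω : Y ω ≤ m) =>
    hω.trans (Nat.cast_le.mpr hmn)
  have hlim : Tendsto (fun n : ℕ => (P {ω | Y ω ≤ n}).toReal) atTop (𝓝 1) := by
    have := tendsto_measure_iUnion_atTop (μ := P) hmono
    rw [hunion, measure_univ] at this
    simpa [Function.comp_def] using (ENNReal.tendsto_toReal ENNReal.one_ne_top).comp this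
  obtain ⟨n, hn⟩ := (hlim.eventually (eventually_ge_nhds hp)).exists
  exact ⟨n, hn⟩

lemma monotoneOn [IsProbabilityMeasure P] (hY : 0 ≤ᵐ[P] Y) :
    MonotoneOn (fun u => VaR P u Y) (Set.Ioo 0 1) := fun _ hu _ hv huv =>
  csInf_le_csInf (bddBelow_set hu.1 hY) (exists_le_measure Y hv.2)
    fun _ hx => huv.trans hx

end VaR

section UniformTransform

variable {Ω : Type*} [MeasurableSpace Ω] {P : Measure Ω} {U : Ω → ℝ}

lemma measure_setOf_le_of_map_eq_uniform (hU : Measurable U)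
    (hUunif : P.map U = volume.restrict (Set.Icc 0 1)) {p : ℝ} (hp1 : p ≤ 1) :
    P {ω | U ω ≤ p} = ENNReal.ofReal p := by
  have hset : Set.Iic p ∩ Set.Icc 0 1 = Set.Icc 0 p := by
    ext x; simp only [Set.mem_inter_iff, Set.mem_Iic, Set.mem_Icc]; grind
  change P (U ⁻¹' Set.Iic p) = _
  rw [← Measure.map_apply hU measurableSet_Iic, hUunif,
    Measure.restrict_apply measurableSet_Iic, hset, Real.volume_Icc, sub_zero]

lemma integral_indicator_Ioi_comp_of_map_eq_uniform (hU : Measurable U)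
    (hUunif : P.map U = volume.restrict (Set.Icc 0 1)) {h : ℝ → ℝ}
    (hh : AEStronglyMeasurable h (volume.restrict (Set.Icc 0 1))) {p : ℝ} (hp0 : 0 ≤ p)
    (hp1 : p ≤ 1) :
    ∫ ω, (Set.Ioi p).indicator h (U ω) ∂P = ∫ u in p..1, h u := by
  have hset : Set.Ioi p ∩ Set.Icc 0 1 = Set.Ioc p 1 := by
    ext x; simp only [Set.mem_inter_iff, Set.mem_Ioi, Set.mem_Icc, Set.mem_Ioc]; grind
  rw [← integral_map hU.aemeasurable (hUunif ▸ hh.indicator measurableSet_Ioi), hUunif,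
    integral_indicator measurableSet_Ioi, Measure.restrict_restrict measurableSet_Ioi, hset,
    intervalIntegral.integral_of_le hp1]

end UniformTransform

lemma aestronglyMeasurable_of_monotoneOn_Ioo {h : ℝ → ℝ} (hh : MonotoneOn h (Set.Ioo 0 1)) :
    AEStronglyMeasurable h (volume.restrict (Set.Icc 0 1)) := by
  rw [Measure.restrict_congr_set Ioo_ae_eq_Icc.symm]
  exact (aemeasurable_restrict_of_monotoneOn measurableSet_Ioo hh).aestronglyMeasurable

lemma ES.one_sub_mul {Ω : Type*} [MeasurableSpace Ω] (P : Measure Ω) {p : ℝ} (hp : p ≠ 1)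
    (Y : Ω → ℝ) : (1 - p) * ES P p Y = ∫ u in p..1, VaR P u Y := by
  rw [ES, ← mul_assoc, mul_inv_cancel₀ (sub_ne_zero.mpr hp.symm), one_mul]

theorem stmt3_general {Ω : Type*} [MeasurableSpace Ω] (P : Measure Ω) [IsProbabilityMeasure P]
    (X : Ω → ℝ) (hXmeas : Measurable X) (hXnonneg : ∀ᵐ ω ∂P, 0 ≤ X ω)
    (γ : ℝ → ℝ) (hγpos : ∀ x, 0 < γ x)
    (p : ℝ) (hp : p ∈ Set.Ioo (0 : ℝ) 1)
    (x₀ : ℝ)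
    (hES : x₀ / (1 - p) ≤ ES P p (fun ω => γ (X ω) * X ω))
    (U : Ω → ℝ)
    (hUmeas : Measurable[MeasurableSpace.comap X inferInstance] U)
    (hUunif : Measure.map U P = MeasureTheory.volume.restrict (Set.Icc (0 : ℝ) 1))
    (hUqt : ∀ᵐ ω ∂P, VaR P (U ω) (fun ω' => X ω' * γ (X ω')) = X ω * γ (X ω)) :
    x₀ ≤ ∫ ω, γ (X ω) * (if p < U ω then X ω else 0) ∂P ∧
    (∀ᵐ ω ∂P, 0 ≤ (if p < U ω then X ω else 0) ∧ (if p < U ω then X ω else 0) ≤ X ω) ∧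
    VaR P p (fun ω => if p < U ω then X ω else 0) = 0 ∧
    ∀ g : ℝ → ℝ, memGns P X γ x₀ g →
      VaR P p (fun ω => if p < U ω then X ω else 0) ≤ VaR P p (fun ω => g (X ω)) := by
  obtain ⟨hp0, hp1⟩ := hp
  have hU : Measurable U := hUmeas.mono hXmeas.comap_le le_rfl
  set Y : Ω → ℝ := fun ω => if p < U ω then X ω else 0 with hYdef
  have hbounds : ∀ᵐ ω ∂P, 0 ≤ Y ω ∧ Y ω ≤ X ω :=
    hXnonneg.mono fun ω hω => by by_cases hc : p < U ω <;> simp [hYdef, hc, hω]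
  have hVaR : VaR P p Y = 0 := by
    refine VaR.eq_zero_of_le_measure hp0 (hbounds.mono fun _ h => h.1) ?_
    calc p = (P {ω | U ω ≤ p}).toReal := by
          rw [measure_setOf_le_of_map_eq_uniform hU hUunif hp1.le, ENNReal.toReal_ofReal hp0.le]
      _ ≤ (P {ω | Y ω ≤ 0}).toReal := ENNReal.toReal_mono (measure_ne_top _ _)
          (measure_mono fun ω (hω : U ω ≤ p) => by simp [hYdef, not_lt.mpr hω])
  have hZnonneg : ∀ᵐ ω ∂P, 0 ≤ X ω * γ (X ω) :=
    hXnonneg.mono fun ω hω => mul_nonneg hω (hγpos _).le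
  have hbudget : ∫ ω, γ (X ω) * Y ω ∂P = ∫ u in p..1, VaR P u (fun ω => X ω * γ (X ω)) := by
    rw [← integral_indicator_Ioi_comp_of_map_eq_uniform hU hUunif
      (aestronglyMeasurable_of_monotoneOn_Ioo (VaR.monotoneOn hZnonneg)) hp0.le hp1.le]
    refine integral_congr_ae (hUqt.mono fun ω hω => ?_)
    by_cases hc : p < U ω
    · simp [hYdef, hc, hω, mul_comm]
    · simp [hYdef, hc]
  refine ⟨?_, hbounds, hVaR, fun g hg => hVaR ▸ VaR.nonneg hp0 (hg.2.2.2.mono fun _ h => h.1)⟩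
  rw [hbudget, ← ES.one_sub_mul P hp1.ne]
  have h1p : 0 < 1 - p := sub_pos.mpr hp1
  calc x₀ = (1 - p) * (x₀ / (1 - p)) := (mul_div_cancel₀ _ h1p.ne').symm
    _ ≤ (1 - p) * ES P p (fun ω => γ (X ω) * X ω) := mul_le_mul_of_nonneg_left hES h1p.le
    _ = _ := by simp only [mul_comm (γ _)]

theorem stmt3 {Ω : Type*} [MeasurableSpace Ω] (P : Measure Ω) [IsProbabilityMeasure P]
    (hPatomless : Atomless P)
    (X : Ω → ℝ) (hXmeas : Measurable X) (hXnonneg : ∀ᵐ ω ∂P, 0 ≤ X ω)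
    (hXdens : HasPositiveDensityOnSupport (Measure.map X P))
    (γ : ℝ → ℝ) (hγcont : Continuous γ) (hγpos : ∀ x, 0 < γ x)
    (hγint : Integrable (fun ω => γ (X ω)) P)
    (hγ1 : ∫ ω, γ (X ω) ∂P = 1)
    (hγXint : Integrable (fun ω => γ (X ω) * X ω) P)
    (p : ℝ) (hp : p ∈ Set.Ioo (0 : ℝ) 1)
    (x₀ : ℝ) (hx₀ : 0 ≤ x₀) (hx₀lt : x₀ < ∫ ω, γ (X ω) * X ω ∂P)
    (hES : x₀ / (1 - p) ≤ ES P p (fun ω => γ (X ω) * X ω))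
    (U : Ω → ℝ)
    (hUmeas : Measurable[MeasurableSpace.comap X inferInstance] U)
    (hUunif : Measure.map U P = MeasureTheory.volume.restrict (Set.Icc (0 : ℝ) 1))
    (hUqt : ∀ᵐ ω ∂P, VaR P (U ω) (fun ω' => X ω' * γ (X ω')) = X ω * γ (X ω)) :
    x₀ ≤ ∫ ω, γ (X ω) * (if p < U ω then X ω else 0) ∂P ∧
    (∀ᵐ ω ∂P, 0 ≤ (if p < U ω then X ω else 0) ∧ (if p < U ω then X ω else 0) ≤ X ω) ∧
    VaR P p (fun ω => if p < U ω then X ω else 0) = 0 ∧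
    ∀ g : ℝ → ℝ, memGns P X γ x₀ g →
      VaR P p (fun ω => if p < U ω then X ω else 0) ≤ VaR P p (fun ω => g (X ω)) :=
  stmt3_general P X hXmeas hXnonneg γ hγpos p hp x₀ hES U hUmeas hUunif hUqt
end

section
/- Let 0 ≤ x₀ < 𝔼[γ(X)·X], let 𝒢_ns be the set of measurable g : ℝ → ℝ with 𝔼[γ(X)·g(X)] ≥ x₀ and 0 ≤ g(X) ≤ X almost surely, and set q := inf{VaR_p(g(X)) : g ∈ 𝒢_ns}. If q > 0 and g* ∈ 𝒢_ns satisfies VaR_p(g*(X)) = q, then the budget constraint is binding: 𝔼[γ(X)·g*(X)] = x₀. -/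
open MeasureTheory Filter
open scoped ENNReal Topology Classical

/-! If the budget were slack, scaling the optimal payoff `g*` by a factor `c < 1` close to `1` would
keep it admissible while multiplying its (positive) Value-at-Risk by `c`, contradicting minimality. -/

open scoped Pointwise

section VaR

variable {Ω : Type*} [MeasurableSpace Ω] (P : Measure Ω) (p : ℝ)

lemma VaR_const_mul {c : ℝ} (hc : 0 < c) (Y : Ω → ℝ) :
    VaR P p (fun ω => c * Y ω) = c * VaR P p Y := by
  unfold VaR
  have hset : {x : ℝ | p ≤ (P {ω | c * Y ω ≤ x}).toReal}
      = c • {x : ℝ | p ≤ (P {ω | Y ω ≤ x}).toReal} := by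
    ext x
    rw [Set.mem_smul_set_iff_inv_smul_mem₀ hc.ne']
    simp only [smul_eq_mul, Set.mem_ofPred_eq]
    have hlevel : {ω | c * Y ω ≤ x} = {ω | Y ω ≤ c⁻¹ * x} := by
      ext ω
      rw [Set.mem_ofPred_eq, Set.mem_ofPred_eq, inv_mul_eq_div, le_div_iff₀ hc, mul_comm]
    rw [hlevel]
  rw [hset, Real.sInf_smul_of_nonneg hc.le, smul_eq_mul]

lemma VaR_nonneg_of_ae_nonneg (hp : 0 < p) {Y : Ω → ℝ} (hY : ∀ᵐ ω ∂P, 0 ≤ Y ω) :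
    0 ≤ VaR P p Y := by
  refine Real.sInf_nonneg fun x hx => ?_
  by_contra! hx_neg
  have hzero : P {ω | Y ω ≤ x} = 0 := by
    rw [measure_eq_zero_iff_ae_notMem]
    filter_upwards [hY] with ω hω
    exact not_le.mpr (hx_neg.trans_le hω)
  rw [Set.mem_ofPred_eq, hzero, ENNReal.toReal_zero] at hx
  linarith

end VaR

section NoShortSelling

variable {Ω : Type*} [MeasurableSpace Ω] (P : Measure Ω) (X : Ω → ℝ) (γ : ℝ → ℝ) (x₀ : ℝ)

lemma memGns.const_mul {g : ℝ → ℝ} (hg : memGns P X γ x₀ g) {c : ℝ} (hc₀ : 0 ≤ c) (hc₁ : c ≤ 1)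
    (hbudget : x₀ ≤ c * ∫ ω, γ (X ω) * g (X ω) ∂P) : memGns P X γ x₀ (fun x => c * g x) := by
  obtain ⟨hg_meas, hg_int, -, hg_bounds⟩ := hg
  have hscale : (fun ω => γ (X ω) * (c * g (X ω))) = fun ω => c * (γ (X ω) * g (X ω)) := by
    funext ω; ring
  refine ⟨measurable_const.mul hg_meas, ?_, ?_, ?_⟩
  · rw [hscale]; exact hg_int.const_mul c
  · rwa [hscale, integral_const_mul]
  · filter_upwards [hg_bounds] with ω ⟨hg_nonneg, hg_le⟩
    exact ⟨mul_nonneg hc₀ hg_nonneg, (mul_le_of_le_one_left hg_nonneg hc₁).trans hg_le⟩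

lemma bddBelow_VaR_memGns {p : ℝ} (hp : 0 < p) :
    BddBelow {v : ℝ | ∃ g : ℝ → ℝ, memGns P X γ x₀ g ∧ v = VaR P p (fun ω => g (X ω))} := by
  refine ⟨0, ?_⟩
  rintro _ ⟨g, hg, rfl⟩
  exact VaR_nonneg_of_ae_nonneg P p hp (hg.2.2.2.mono fun _ h => h.1)

end NoShortSelling

lemma exists_pos_lt_one_le_mul {x₀ I : ℝ} (hx₀ : 0 ≤ x₀) (hI : x₀ < I) :
    ∃ c : ℝ, 0 < c ∧ c < 1 ∧ x₀ ≤ c * I := by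
  have hI_pos : 0 < I := hx₀.trans_lt hI
  refine ⟨(x₀ + I) / (2 * I), by positivity, ?_, ?_⟩
  · rw [div_lt_one (by positivity)]; linarith
  · rw [div_mul_eq_mul_div, le_div_iff₀ (by positivity)]; nlinarith

theorem stmt11_general {Ω : Type*} [MeasurableSpace Ω] (P : Measure Ω)
    (X : Ω → ℝ)
    (γ : ℝ → ℝ)
    (p : ℝ) (hp : p ∈ Set.Ioo (0 : ℝ) 1)
    (x₀ : ℝ) (hx₀ : 0 ≤ x₀)
    (q : ℝ)
    (hq : q = sInf {v : ℝ | ∃ g : ℝ → ℝ, memGns P X γ x₀ g ∧ v = VaR P p (fun ω => g (X ω))})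
    (hqpos : 0 < q) :
    ∀ g : ℝ → ℝ, memGns P X γ x₀ g → VaR P p (fun ω => g (X ω)) = q →
      ∫ ω, γ (X ω) * g (X ω) ∂P = x₀ := by
  intro g hg hVaR
  by_contra hne
  obtain ⟨c, hc₀, hc₁, hc_budget⟩ :=
    exists_pos_lt_one_le_mul hx₀ (lt_of_le_of_ne hg.2.2.1 (Ne.symm hne))
  have hscaled : c * q ∈ {v : ℝ | ∃ g : ℝ → ℝ, memGns P X γ x₀ g ∧
      v = VaR P p (fun ω => g (X ω))} :=
    ⟨_, hg.const_mul P X γ x₀ hc₀.le hc₁.le hc_budget, by rw [VaR_const_mul P p hc₀, hVaR]⟩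
  have hq_le : q ≤ c * q := hq.trans_le (csInf_le (bddBelow_VaR_memGns P X γ x₀ hp.1) hscaled)
  nlinarith

theorem stmt11 {Ω : Type*} [MeasurableSpace Ω] (P : Measure Ω) [IsProbabilityMeasure P]
    (hPatomless : Atomless P)
    (X : Ω → ℝ) (hXmeas : Measurable X) (hXnonneg : ∀ᵐ ω ∂P, 0 ≤ X ω)
    (hXdens : HasPositiveDensityOnSupport (Measure.map X P))
    (γ : ℝ → ℝ) (hγcont : Continuous γ) (hγpos : ∀ x, 0 < γ x)
    (hγint : Integrable (fun ω => γ (X ω)) P)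
    (hγ1 : ∫ ω, γ (X ω) ∂P = 1)
    (hγXint : Integrable (fun ω => γ (X ω) * X ω) P)
    (p : ℝ) (hp : p ∈ Set.Ioo (0 : ℝ) 1)
    (x₀ : ℝ) (hx₀ : 0 ≤ x₀) (hx₀lt : x₀ < ∫ ω, γ (X ω) * X ω ∂P)
    (q : ℝ)
    (hq : q = sInf {v : ℝ | ∃ g : ℝ → ℝ, memGns P X γ x₀ g ∧ v = VaR P p (fun ω => g (X ω))})
    (hqpos : 0 < q) :
    ∀ g : ℝ → ℝ, memGns P X γ x₀ g → VaR P p (fun ω => g (X ω)) = q →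
      ∫ ω, γ (X ω) * g (X ω) ∂P = x₀ :=
  stmt11_general P X γ p hp x₀ hx₀ q hq hqpos
end

section
/- Let q > 0 and let U be a uniform transform of (X−q)·γ(X) on (Ω, σ(X), ℙ), i.e. a σ(X)-measurable random variable uniformly distributed on [0,1] with F⁻¹_{(X−q)γ(X)}(U) = (X−q)·γ(X) almost surely. Then the event A* := {U > p} maximizes 𝔼[γ(X)·(X·𝟙_A + (X ∧ q)·𝟙_{A^c})] over all σ(X)-measurable events A with ℙ(A) = 1−p; equivalently, A* maximizes 𝔼[(X−q)⁺·γ(X)·𝟙_A] over such A. -/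
open MeasureTheory Filter
open scoped ENNReal Topology Classical

/-
Write `Z = (X - q) γ(X)`. Then `(X - q)⁺ γ(X) = Z⁺` and
`γ(X) (X 𝟙_A + (X ∧ q) 𝟙_Aᶜ) = γ(X) X - Z⁺ + Z⁺ 𝟙_A`, so both objectives amount to maximizing
`∫_A Z⁺`. Since `U` is a quantile transform of `Z` and the quantile function is monotone,
`Z ≥ VaR_p(Z)` on `{U > p}` and `Z ≤ VaR_p(Z)` off it. A bathtub argument then shows that among
events of the same probability, `{U > p}` maximizes the integral of any nondecreasing function
of `Z`.
-/

section Bathtub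

variable {α : Type*} [MeasurableSpace α] {μ : Measure α} [IsFiniteMeasure μ]
  {f : α → ℝ} {A B : Set α} {c : ℝ}

/-- Pointwise, `𝟙_A (f - c) ≤ 𝟙_B (f - c)`; the constant `c` integrates to the same value over
`A` and over `B`. -/
lemma setIntegral_le_setIntegral_of_ge_on_of_le_off (hf : Integrable f μ)
    (hA : MeasurableSet A) (hB : MeasurableSet B) (hAB : μ A = μ B)
    (h_ge : ∀ᵐ x ∂μ, x ∈ B → c ≤ f x) (h_le : ∀ᵐ x ∂μ, x ∉ B → f x ≤ c) :
    ∫ x in A, f x ∂μ ≤ ∫ x in B, f x ∂μ := by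
  have hfc : Integrable (fun x => f x - c) μ := hf.sub (integrable_const c)
  have key : ∫ x, A.indicator (fun x => f x - c) x ∂μ ≤
      ∫ x, B.indicator (fun x => f x - c) x ∂μ := by
    refine integral_mono_ae (hfc.indicator hA) (hfc.indicator hB) ?_
    filter_upwards [h_ge, h_le] with x hxB hxBc
    by_cases hx : x ∈ B <;> by_cases hx' : x ∈ A <;>
      simp [Set.indicator_of_mem, Set.indicator_of_notMem, hx, hx', hxB, hxBc]
  rw [integral_indicator hA, integral_indicator hB,
    integral_sub hf.integrableOn (integrable_const c).integrableOn,
    integral_sub hf.integrableOn (integrable_const c).integrableOn,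
    setIntegral_const, setIntegral_const, measureReal_def, measureReal_def, hAB] at key
  linarith

end Bathtub

open ProbabilityTheory

section VaR

variable {Ω : Type*} [MeasurableSpace Ω] (P : Measure Ω) [IsProbabilityMeasure P]
  {Z : Ω → ℝ}

lemma VaR_eq_sInf_cdf (hZ : Measurable Z) (u : ℝ) :
    VaR P u Z = sInf {x : ℝ | u ≤ cdf (P.map Z) x} := by
  have := Measure.isProbabilityMeasure_map (μ := P) hZ.aemeasurable
  simp_rw [cdf_eq_real, measureReal_def, Measure.map_apply hZ measurableSet_Iic]
  rfl

lemma bddBelow_setOf_le_cdf (μ : Measure ℝ) {u : ℝ} (hu : 0 < u) :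
    BddBelow {x : ℝ | u ≤ cdf μ x} := by
  obtain ⟨x₀, hx₀⟩ := eventually_atBot.1 ((tendsto_cdf_atBot μ).eventually_lt_const hu)
  exact ⟨x₀, fun x hx => not_lt.1 fun hlt => (hx₀ x hlt.le).not_ge hx⟩

lemma nonempty_setOf_le_cdf (μ : Measure ℝ) {v : ℝ} (hv : v < 1) :
    {x : ℝ | v ≤ cdf μ x}.Nonempty :=
  ((tendsto_cdf_atTop μ).eventually_const_le hv).exists

lemma VaR_mono (hZ : Measurable Z) {u v : ℝ} (hu : 0 < u) (hv : v < 1) (huv : u ≤ v) :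
    VaR P u Z ≤ VaR P v Z := by
  rw [VaR_eq_sInf_cdf P hZ, VaR_eq_sInf_cdf P hZ]
  exact csInf_le_csInf (bddBelow_setOf_le_cdf _ hu) (nonempty_setOf_le_cdf _ hv)
    fun x hx => huv.trans hx

lemma ae_VaR_le_of_VaR_comp_eq (hZ : Measurable Z) {U : Ω → ℝ}
    (hU : ∀ᵐ ω ∂P, U ω ∈ Set.Ioo (0 : ℝ) 1) (hUZ : ∀ᵐ ω ∂P, VaR P (U ω) Z = Z ω)
    {p : ℝ} (hp : p ∈ Set.Ioo (0 : ℝ) 1) :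
    (∀ᵐ ω ∂P, p < U ω → VaR P p Z ≤ Z ω) ∧ (∀ᵐ ω ∂P, ¬p < U ω → Z ω ≤ VaR P p Z) := by
  constructor <;> filter_upwards [hU, hUZ] with ω hω hωZ hpω <;> rw [← hωZ]
  · exact VaR_mono P hZ hp.1 hω.2 hpω.le
  · exact VaR_mono P hZ hω.1 hp.2 (not_lt.1 hpω)

end VaR

section Uniform

variable {Ω : Type*} [MeasurableSpace Ω] {P : Measure Ω} {U : Ω → ℝ}

lemma measure_preimage_of_map_eq_uniform (hU : Measurable U)
    (hUunif : P.map U = volume.restrict (Set.Icc (0 : ℝ) 1)) {s : Set ℝ} (hs : MeasurableSet s) :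
    P (U ⁻¹' s) = volume (s ∩ Set.Icc 0 1) := by
  rw [← Measure.map_apply hU hs, hUunif, Measure.restrict_apply hs]

lemma measure_lt_of_map_eq_uniform (hU : Measurable U)
    (hUunif : P.map U = volume.restrict (Set.Icc (0 : ℝ) 1)) {p : ℝ} (hp : p ∈ Set.Icc (0 : ℝ) 1) :
    P {ω | p < U ω} = ENNReal.ofReal (1 - p) := by
  change P (U ⁻¹' Set.Ioi p) = _
  rw [measure_preimage_of_map_eq_uniform hU hUunif measurableSet_Ioi,
    show Set.Ioi p ∩ Set.Icc 0 1 = Set.Ioc p 1 by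
      ext x; simp only [Set.mem_inter_iff, Set.mem_Ioi, Set.mem_Icc, Set.mem_Ioc]; grind,
    Real.volume_Ioc]

lemma ae_mem_Ioo_of_map_eq_uniform (hU : Measurable U)
    (hUunif : P.map U = volume.restrict (Set.Icc (0 : ℝ) 1)) :
    ∀ᵐ ω ∂P, U ω ∈ Set.Ioo (0 : ℝ) 1 := by
  refine ae_of_ae_map hU.aemeasurable ?_
  rw [hUunif, ← Measure.restrict_congr_set Ioo_ae_eq_Icc]
  exact ae_restrict_mem measurableSet_Ioo

end Uniform

lemma setIntegral_comp_le_of_VaR_comp_eq {Ω : Type*} [MeasurableSpace Ω] {P : Measure Ω}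
    [IsProbabilityMeasure P] {Y U : Ω → ℝ} (hY : Measurable Y) (hU : Measurable U)
    (hU01 : ∀ᵐ ω ∂P, U ω ∈ Set.Ioo (0 : ℝ) 1) (hUY : ∀ᵐ ω ∂P, VaR P (U ω) Y = Y ω)
    {p : ℝ} (hp : p ∈ Set.Ioo (0 : ℝ) 1) {g : ℝ → ℝ} (hg : Monotone g)
    (hgY : Integrable (fun ω => g (Y ω)) P) {A : Set Ω} (hA : MeasurableSet A)
    (hAU : P A = P {ω | p < U ω}) :
    ∫ ω in A, g (Y ω) ∂P ≤ ∫ ω in {ω | p < U ω}, g (Y ω) ∂P := by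
  obtain ⟨h_ge, h_le⟩ := ae_VaR_le_of_VaR_comp_eq P hY hU01 hUY hp
  exact setIntegral_le_setIntegral_of_ge_on_of_le_off hgY hA
    (measurableSet_lt measurable_const hU) hAU (h_ge.mono fun ω h hω => hg (h hω))
    (h_le.mono fun ω h hω => hg (h hω))

section IteZero

variable {α : Type*} [MeasurableSpace α] {μ : Measure α} {b : α → Prop} [DecidablePred b]

lemma integral_ite_zero (f : α → ℝ) (hb : MeasurableSet {x | b x}) :
    ∫ x, (if b x then f x else 0) ∂μ = ∫ x in {x | b x}, f x ∂μ := by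
  rw [← integral_indicator hb]
  simp only [Set.indicator_apply, Set.mem_ofPred_eq]

lemma integral_add_ite_zero {f g : α → ℝ} (hf : Integrable f μ) (hg : Integrable g μ)
    (hb : MeasurableSet {x | b x}) :
    ∫ x, (f x + if b x then g x else 0) ∂μ = ∫ x, f x ∂μ + ∫ x in {x | b x}, g x ∂μ := by
  have hg' : Integrable (fun x => if b x then g x else 0) μ :=
    (hg.indicator hb).congr <| ae_of_all _ fun x => by
      simp only [Set.indicator_apply, Set.mem_ofPred_eq]
  rw [integral_add hf hg', integral_ite_zero g hb]

end IteZero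

lemma mul_ite_min_eq (g x q : ℝ) (b : Prop) [Decidable b] :
    g * (if b then x else min x q) =
      g * x - max (x - q) 0 * g + if b then max (x - q) 0 * g else 0 := by
  split_ifs
  · ring
  · rcases le_total x q with h | h
    · simp [h, sub_nonpos.2 h]
    · rw [min_eq_right h, max_eq_left (sub_nonneg.2 h)]
      ring

theorem stmt12_general {Ω : Type*} [MeasurableSpace Ω] (P : Measure Ω) [IsProbabilityMeasure P]
    (X : Ω → ℝ) (hXmeas : Measurable X)
    (γ : ℝ → ℝ) (hγcont : Continuous γ) (hγpos : ∀ x, 0 < γ x)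
    (hγint : Integrable (fun ω => γ (X ω)) P)
    (hγXint : Integrable (fun ω => γ (X ω) * X ω) P)
    (p : ℝ) (hp : p ∈ Set.Ioo (0 : ℝ) 1)
    (q : ℝ)
    (U : Ω → ℝ)
    (hUmeas : Measurable[MeasurableSpace.comap X inferInstance] U)
    (hUunif : Measure.map U P = MeasureTheory.volume.restrict (Set.Icc (0 : ℝ) 1))
    (hUqt : ∀ᵐ ω ∂P, VaR P (U ω) (fun ω' => (X ω' - q) * γ (X ω')) = (X ω - q) * γ (X ω)) :
    ∀ A : Set Ω, MeasurableSet[MeasurableSpace.comap X inferInstance] A →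
      (P A).toReal = 1 - p →
      (∫ ω, γ (X ω) * (if ω ∈ A then X ω else min (X ω) q) ∂P ≤
        ∫ ω, γ (X ω) * (if p < U ω then X ω else min (X ω) q) ∂P) ∧
      (∫ ω, (if ω ∈ A then max (X ω - q) 0 * γ (X ω) else 0) ∂P ≤
        ∫ ω, (if p < U ω then max (X ω - q) 0 * γ (X ω) else 0) ∂P) := by
  intro A hAm hAP
  set Z : Ω → ℝ := fun ω => (X ω - q) * γ (X ω)
  have hA : MeasurableSet A := hXmeas.comap_le A hAm
  have hU : Measurable U := hUmeas.mono hXmeas.comap_le le_rfl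
  have hB : MeasurableSet {ω | p < U ω} := measurableSet_lt measurable_const hU
  have hZint : Integrable Z P :=
    (hγXint.sub (hγint.const_mul q)).congr <| ae_of_all _ fun ω => by
      simp only [Z, Pi.sub_apply]; ring
  have hZpos (ω : Ω) : max (X ω - q) 0 * γ (X ω) = max (Z ω) 0 := by
    rw [max_mul_of_nonneg _ _ (hγpos _).le, zero_mul]
  have hAU : P A = P {ω | p < U ω} := by
    rw [measure_lt_of_map_eq_uniform hU hUunif (Set.Ioo_subset_Icc_self hp), ← hAP,
      ENNReal.ofReal_toReal (measure_ne_top P A)]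
  have key : ∫ ω in A, max (Z ω) 0 ∂P ≤ ∫ ω in {ω | p < U ω}, max (Z ω) 0 ∂P :=
    setIntegral_comp_le_of_VaR_comp_eq
      ((hXmeas.sub measurable_const).mul (hγcont.measurable.comp hXmeas)) hU
      (ae_mem_Ioo_of_map_eq_uniform hU hUunif) hUqt hp (monotone_id.max monotone_const)
      hZint.pos_part hA hAU
  have hite (b : Ω → Prop) [DecidablePred b] (hb : MeasurableSet {ω | b ω}) :
      ∫ ω, (if b ω then max (X ω - q) 0 * γ (X ω) else 0) ∂P =
        ∫ ω in {ω | b ω}, max (Z ω) 0 ∂P := by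
    simp_rw [hZpos]
    exact integral_ite_zero _ hb
  have hsplit (b : Ω → Prop) [DecidablePred b] (hb : MeasurableSet {ω | b ω}) :
      ∫ ω, γ (X ω) * (if b ω then X ω else min (X ω) q) ∂P =
        ∫ ω, (γ (X ω) * X ω - max (Z ω) 0) ∂P + ∫ ω in {ω | b ω}, max (Z ω) 0 ∂P := by
    simp_rw [mul_ite_min_eq, hZpos]
    exact integral_add_ite_zero (hγXint.sub hZint.pos_part) hZint.pos_part hb
  constructor
  · rw [hsplit (· ∈ A) hA, hsplit _ hB]
    exact (add_le_add_iff_left _).2 key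
  · rw [hite (· ∈ A) hA, hite _ hB]
    exact key

theorem stmt12 {Ω : Type*} [MeasurableSpace Ω] (P : Measure Ω) [IsProbabilityMeasure P]
    (hPatomless : Atomless P)
    (X : Ω → ℝ) (hXmeas : Measurable X) (hXnonneg : ∀ᵐ ω ∂P, 0 ≤ X ω)
    (hXdens : HasPositiveDensityOnSupport (Measure.map X P))
    (γ : ℝ → ℝ) (hγcont : Continuous γ) (hγpos : ∀ x, 0 < γ x)
    (hγint : Integrable (fun ω => γ (X ω)) P)
    (hγ1 : ∫ ω, γ (X ω) ∂P = 1)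
    (hγXint : Integrable (fun ω => γ (X ω) * X ω) P)
    (p : ℝ) (hp : p ∈ Set.Ioo (0 : ℝ) 1)
    (q : ℝ) (hqpos : 0 < q)
    (U : Ω → ℝ)
    (hUmeas : Measurable[MeasurableSpace.comap X inferInstance] U)
    (hUunif : Measure.map U P = MeasureTheory.volume.restrict (Set.Icc (0 : ℝ) 1))
    (hUqt : ∀ᵐ ω ∂P, VaR P (U ω) (fun ω' => (X ω' - q) * γ (X ω')) = (X ω - q) * γ (X ω)) :
    ∀ A : Set Ω, MeasurableSet[MeasurableSpace.comap X inferInstance] A →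
      (P A).toReal = 1 - p →
      (∫ ω, γ (X ω) * (if ω ∈ A then X ω else min (X ω) q) ∂P ≤
        ∫ ω, γ (X ω) * (if p < U ω then X ω else min (X ω) q) ∂P) ∧
      (∫ ω, (if ω ∈ A then max (X ω - q) 0 * γ (X ω) else 0) ∂P ≤
        ∫ ω, (if p < U ω then max (X ω - q) 0 * γ (X ω) else 0) ∂P) :=
  stmt12_general P X hXmeas γ hγcont hγpos hγint hγXint p hp q U hUmeas hUunif hUqt
end
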